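/- Let Ω ⊆ ℝ^N be a measurable set and f : Ω × ℝ → ℝ satisfy: (f1) f is continuous and for every M > 0 there exists C_M > 0 with |f(x,s)| ≤ C_M for all x ∈ Ω and |s| ≤ M; (f2) for every α > 0, f(x,s)/e^{α s²} → 0 as |s| → ∞ uniformly in x ∈ Ω; and, in case Ω has infinite Lebesgue measure, additionally (f5-u) there exist μ > 1, C₀ > 0 and δ₀ > 0 such that |f(x,s)| ≤ C₀ |s|^μ for all x ∈ Ω and |s| ≤ δ₀. Let u ∈ 𝓜(Ω) and (u_n) ⊂ 𝓜(Ω) be such that ‖u_n − u‖_{𝓛(Ω)} → 0. Then lim_{n→∞} ∫_Ω ( f(x, u_n(x)) − f(x, u(x)) )² dx = 0. -/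

import Mathlib

/-!
The growth conditions give `f(x,s)² ≤ A (e^{s²} - 1) + E`, and when `|Ω| = ∞` the power bound
near `s = 0` lets one take `E = 0`, so that the constant stays integrable. Writing
`uₙ = u + vₙ` and using `e^{(a+b)²} - 1 ≤ ½ (e^{4a²} - 1) + ½ (e^{4b²} - 1)`, the integrand
`(f(uₙ) - f(u))²` is bounded by a fixed integrable function of `u` plus `A (e^{4vₙ²} - 1)`, whose
integral tends to `0` because `‖vₙ‖_𝓛 → 0`. The same smallness gives convergence in measure,
hence a.e. convergence `f(uₙ) → f(u)` along subsequences, and dominated convergence applied to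
`min (f(uₙ) - f(u))² H` concludes.
-/

open MeasureTheory Filter

/-- The Luxemburg norm ‖u‖_{𝓛} := inf{ k > 0 : ∫ (e^{(u/k)²} − 1) dμ ≤ 1 }. -/
noncomputable def luxNorm {α : Type*} [MeasurableSpace α] (μ : Measure α) (u : α → ℝ) : ℝ :=
  sInf {k : ℝ | 0 < k ∧ ∫⁻ x, ENNReal.ofReal (Real.exp ((u x / k) ^ 2) - 1) ∂μ ≤ 1}

open scoped ENNReal Topology

namespace Real

theorem exp_sq_mul_sub_one_le {c : ℝ} (hc0 : 0 ≤ c) (hc1 : c ≤ 1) (t : ℝ) :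
    exp ((c * t) ^ 2) - 1 ≤ c * (exp (t ^ 2) - 1) := by
  have hconv : exp (c ^ 2 * t ^ 2 + (1 - c ^ 2) * 0) ≤ c ^ 2 * exp (t ^ 2) + (1 - c ^ 2) * exp 0 :=
    convexOn_exp.2 (Set.mem_univ _) (Set.mem_univ _) (by positivity) (by nlinarith) (by ring)
  have hc2 : c ^ 2 ≤ c := by nlinarith
  have ht : 0 ≤ exp (t ^ 2) - 1 := by linarith [one_le_exp (sq_nonneg t)]
  rw [mul_zero, add_zero, exp_zero, mul_one] at hconv
  rw [mul_pow]
  nlinarith [mul_nonneg (sub_nonneg.2 hc2) ht]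

theorem exp_sq_add_sub_one_le (a b : ℝ) :
    exp ((a + b) ^ 2) - 1 ≤ (exp ((2 * a) ^ 2) - 1) / 2 + (exp ((2 * b) ^ 2) - 1) / 2 := by
  have hsq : exp ((a + b) ^ 2) ≤ exp (2 * a ^ 2) * exp (2 * b ^ 2) := by
    rw [← exp_add]; exact exp_le_exp.2 (by nlinarith [sq_nonneg (a - b)])
  have h4a : exp ((2 * a) ^ 2) = exp (2 * a ^ 2) ^ 2 := by rw [← exp_nat_mul]; ring_nf
  have h4b : exp ((2 * b) ^ 2) = exp (2 * b ^ 2) ^ 2 := by rw [← exp_nat_mul]; ring_nf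
  nlinarith [sq_nonneg (exp (2 * a ^ 2) - exp (2 * b ^ 2))]

theorem sq_le_exp_sq_sub_one (t : ℝ) : t ^ 2 ≤ exp (t ^ 2) - 1 := by
  linarith [add_one_le_exp (t ^ 2)]

theorem sq_sub_le_of_sq_le_exp {A E a b p q : ℝ} (hA : 0 ≤ A)
    (hp : p ^ 2 ≤ A * (exp (a ^ 2) - 1) + E) (hq : q ^ 2 ≤ A * (exp (b ^ 2) - 1) + E) :
    (p - q) ^ 2 ≤ A * (exp ((2 * b) ^ 2) - 1) + 2 * A * (exp (b ^ 2) - 1) + 4 * E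
      + A * (exp ((2 * (a - b)) ^ 2) - 1) := by
  have hab := exp_sq_add_sub_one_le b (a - b)
  rw [add_sub_cancel] at hab
  nlinarith [sq_nonneg (p + q), mul_le_mul_of_nonneg_left hab hA]

end Real

open Real

section Modular

variable {α : Type*} [MeasurableSpace α] {μ : Measure α}

noncomputable def expModular (μ : Measure α) (u : α → ℝ) : ℝ≥0∞ :=
  ∫⁻ x, ENNReal.ofReal (exp (u x ^ 2) - 1) ∂μ

/-- The class `𝓜` of the paper. -/
def MemOrliczHeart (μ : Measure α) (u : α → ℝ) : Prop :=
  ∀ k : ℝ, 0 < k → expModular μ (fun x => u x / k) < ∞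

theorem lintegral_ofReal_mul_exp_sq_sub_one {c : ℝ} (hc : 0 ≤ c) (u : α → ℝ) :
    ∫⁻ x, ENNReal.ofReal (c * (exp (u x ^ 2) - 1)) ∂μ = ENNReal.ofReal c * expModular μ u := by
  rw [expModular, ← lintegral_const_mul' _ _ ENNReal.ofReal_ne_top]
  simp_rw [ENNReal.ofReal_mul hc]

theorem expModular_mono {u v : α → ℝ} (h : ∀ x, |u x| ≤ |v x|) :
    expModular μ u ≤ expModular μ v :=
  lintegral_mono fun x =>
    ENNReal.ofReal_le_ofReal <| sub_le_sub_right (exp_le_exp.2 (sq_le_sq.2 (h x))) 1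

theorem expModular_const_mul_le {c : ℝ} (hc0 : 0 ≤ c) (hc1 : c ≤ 1) (u : α → ℝ) :
    expModular μ (fun x => c * u x) ≤ ENNReal.ofReal c * expModular μ u := by
  rw [← lintegral_ofReal_mul_exp_sq_sub_one hc0]
  exact lintegral_mono fun x => ENNReal.ofReal_le_ofReal (exp_sq_mul_sub_one_le hc0 hc1 _)

theorem MemOrliczHeart.expModular_const_mul_lt_top {u : α → ℝ} (hu : MemOrliczHeart μ u)
    (c : ℝ) : expModular μ (fun x => c * u x) < ∞ := by
  rcases eq_or_ne c 0 with rfl | hc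
  · simp [expModular]
  · have hsq : ∀ x, (c * u x) ^ 2 = (u x / |c|⁻¹) ^ 2 := fun x => by
      rw [div_inv_eq_mul, mul_pow, mul_pow, sq_abs, mul_comm]
    simpa only [expModular, hsq] using hu |c|⁻¹ (by positivity)

theorem MemOrliczHeart.sub {u v : α → ℝ} (hu : MemOrliczHeart μ u) (hv : MemOrliczHeart μ v)
    (hum : AEMeasurable u μ) : MemOrliczHeart μ (fun x => u x - v x) := by
  intro k hk
  calc expModular μ (fun x => (u x - v x) / k)
      ≤ ∫⁻ x, ENNReal.ofReal (2⁻¹ * (exp ((u x / (k / 2)) ^ 2) - 1))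
          + ENNReal.ofReal (2⁻¹ * (exp ((v x / (k / 2)) ^ 2) - 1)) ∂μ := by
        refine lintegral_mono fun x => le_trans (ENNReal.ofReal_le_ofReal ?_) ENNReal.ofReal_add_le
        have := exp_sq_add_sub_one_le (u x / k) (-(v x / k))
        convert this using 3 <;> field_simp; ring
    _ = ENNReal.ofReal 2⁻¹ * expModular μ (fun x => u x / (k / 2))
          + ENNReal.ofReal 2⁻¹ * expModular μ (fun x => v x / (k / 2)) := by
        rw [lintegral_add_left' (by fun_prop), lintegral_ofReal_mul_exp_sq_sub_one (by norm_num),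
          lintegral_ofReal_mul_exp_sq_sub_one (by norm_num)]
    _ < ∞ := by
        have := hu (k / 2) (by positivity)
        have := hv (k / 2) (by positivity)
        finiteness

end Modular

section Luxemburg

variable {α : Type*} [MeasurableSpace α] {μ : Measure α}

theorem exists_expModular_div_le_one {v : α → ℝ} (hv : expModular μ v < ∞) :
    ∃ k, 0 < k ∧ expModular μ (fun x => v x / k) ≤ 1 := by
  set k := max 1 (expModular μ v).toReal
  have hk1 : 1 ≤ k := le_max_left _ _
  refine ⟨k, by positivity, ?_⟩
  calc expModular μ (fun x => v x / k) = expModular μ (fun x => k⁻¹ * v x) := by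
        simp_rw [div_eq_inv_mul]
    _ ≤ ENNReal.ofReal k⁻¹ * ENNReal.ofReal (expModular μ v).toReal := by
        rw [ENNReal.ofReal_toReal hv.ne]
        exact expModular_const_mul_le (by positivity) (inv_le_one_of_one_le₀ hk1) v
    _ ≤ 1 := by
        rw [← ENNReal.ofReal_mul (by positivity), ENNReal.ofReal_le_one]
        exact inv_mul_le_one_of_le₀ (le_max_right _ _) (by positivity)

theorem expModular_div_le_one_of_luxNorm_lt {v : α → ℝ} (hv : expModular μ v < ∞) {k : ℝ}
    (hk : luxNorm μ v < k) : expModular μ (fun x => v x / k) ≤ 1 := by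
  obtain ⟨k', ⟨hk'0, hk'⟩, hk'k⟩ := exists_lt_of_csInf_lt (exists_expModular_div_le_one hv) hk
  refine le_trans (expModular_mono fun x => ?_) hk'
  rw [abs_div, abs_div, abs_of_pos hk'0, abs_of_pos (hk'0.trans hk'k)]
  exact div_le_div_of_nonneg_left (abs_nonneg _) hk'0 hk'k.le

theorem tendsto_expModular_const_mul_of_luxNorm {v : ℕ → α → ℝ}
    (hv : ∀ n, expModular μ (v n) < ∞) (hlux : Tendsto (fun n => luxNorm μ (v n)) atTop (𝓝 0))
    (c : ℝ) : Tendsto (fun n => expModular μ (fun x => c * v n x)) atTop (𝓝 0) := by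
  rw [ENNReal.tendsto_nhds_zero]
  intro ε hε
  obtain ⟨r, hr0, hr, hrε⟩ := ENNReal.lt_iff_exists_real_btwn.1 hε
  set θ := min r 1
  have hθ : 0 < θ := lt_min (ENNReal.ofReal_pos.1 hr) one_pos
  set K := |c| + 1
  filter_upwards [hlux.eventually_lt_const (show 0 < θ / K by positivity)] with n hn
  calc expModular μ (fun x => c * v n x)
      ≤ expModular μ (fun x => θ * (v n x / (θ / K))) := expModular_mono fun x => by
        rw [show θ * (v n x / (θ / K)) = K * v n x by field_simp, abs_mul, abs_mul,
          abs_of_pos (show 0 < K by positivity)]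
        gcongr
        linarith
    _ ≤ ENNReal.ofReal θ * 1 :=
        (expModular_const_mul_le hθ.le (min_le_right _ _) _).trans <|
          by gcongr; exact expModular_div_le_one_of_luxNorm_lt (hv n) hn
    _ ≤ ε := by
        rw [mul_one]
        exact (ENNReal.ofReal_le_ofReal (min_le_left _ _)).trans hrε.le

end Luxemburg

namespace MeasureTheory

variable {α : Type*} [MeasurableSpace α] {μ : Measure α}

theorem tendstoInMeasure_of_tendsto_expModular {g : ℕ → α → ℝ} {g₀ : α → ℝ}
    (hm : ∀ n, AEMeasurable (fun x => g n x - g₀ x) μ)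
    (h : Tendsto (fun n => expModular μ (fun x => g n x - g₀ x)) atTop (𝓝 0)) :
    TendstoInMeasure μ g atTop g₀ := by
  refine tendstoInMeasure_iff_dist.2 fun ε hε => ?_
  set m := ENNReal.ofReal (exp (ε ^ 2) - 1)
  have hm0 : m ≠ 0 := by simpa [m] using hε.ne'
  have hbound : ∀ n, μ {x | ε ≤ dist (g n x) (g₀ x)}
      ≤ expModular μ (fun x => g n x - g₀ x) / m := fun n => by
    refine (measure_mono fun x hx => ?_).trans
      (meas_ge_le_lintegral_div (by fun_prop) hm0 ENNReal.ofReal_ne_top)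
    have hx : ε ≤ |g n x - g₀ x| := hx
    refine ENNReal.ofReal_le_ofReal (sub_le_sub_right (exp_le_exp.2 ?_) 1)
    exact sq_le_sq.2 (by rwa [abs_of_pos hε])
  refine tendsto_of_tendsto_of_tendsto_of_le_of_le tendsto_const_nhds ?_ (fun _ => zero_le) hbound
  simpa using ENNReal.Tendsto.div_const h (Or.inr hm0)

theorem tendsto_lintegral_of_tendsto_ae_of_le_add {G h : ℕ → α → ℝ≥0∞} {H : α → ℝ≥0∞}
    (hGm : ∀ n, AEMeasurable (G n) μ) (hHm : AEMeasurable H μ) (hH : ∫⁻ x, H x ∂μ ≠ ∞)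
    (hle : ∀ n, ∀ᵐ x ∂μ, G n x ≤ H x + h n x)
    (hG : ∀ᵐ x ∂μ, Tendsto (fun n => G n x) atTop (𝓝 0))
    (hh : Tendsto (fun n => ∫⁻ x, h n x ∂μ) atTop (𝓝 0)) :
    Tendsto (fun n => ∫⁻ x, G n x ∂μ) atTop (𝓝 0) := by
  have hmin : Tendsto (fun n => ∫⁻ x, min (G n x) (H x) ∂μ) atTop (𝓝 0) := by
    have := tendsto_lintegral_of_dominated_convergence' (f := fun _ => 0) H
      (fun n => (hGm n).min hHm) (fun n => ae_of_all _ fun x => min_le_right _ _) hH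
      (hG.mono fun x hx => by simpa using hx.min (tendsto_const_nhds (x := H x)))
    rwa [lintegral_zero] at this
  -- Only the part of `G n` above `H` escapes dominated convergence, and it is at most `h n`.
  have hsplit : ∀ n, ∫⁻ x, G n x ∂μ ≤ ∫⁻ x, min (G n x) (H x) ∂μ + ∫⁻ x, h n x ∂μ := fun n => by
    rw [← lintegral_add_left' ((hGm n).min hHm)]
    refine lintegral_mono_ae ((hle n).mono fun x hx => ?_)
    rcases le_total (G n x) (H x) with hGH | hGH
    · rw [min_eq_left hGH]; exact le_self_add
    · rwa [min_eq_right hGH]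
  refine tendsto_of_tendsto_of_tendsto_of_le_of_le tendsto_const_nhds ?_ (fun _ => zero_le) hsplit
  simpa using hmin.add hh

theorem tendsto_lintegral_of_tendstoInMeasure_of_le_add {g : ℕ → α → ℝ} {g₀ : α → ℝ}
    {Φ : α → ℝ → ℝ≥0∞} {h : ℕ → α → ℝ≥0∞} {H : α → ℝ≥0∞}
    (hg : TendstoInMeasure μ g atTop g₀) (hΦ : ∀ᵐ x ∂μ, Tendsto (Φ x) (𝓝 (g₀ x)) (𝓝 0))
    (hΦm : ∀ n, AEMeasurable (fun x => Φ x (g n x)) μ) (hHm : AEMeasurable H μ)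
    (hH : ∫⁻ x, H x ∂μ ≠ ∞) (hle : ∀ n, ∀ᵐ x ∂μ, Φ x (g n x) ≤ H x + h n x)
    (hh : Tendsto (fun n => ∫⁻ x, h n x ∂μ) atTop (𝓝 0)) :
    Tendsto (fun n => ∫⁻ x, Φ x (g n x) ∂μ) atTop (𝓝 0) := by
  refine tendsto_of_subseq_tendsto fun ns hns => ?_
  obtain ⟨ms, hms, hae⟩ := (hg.comp hns).exists_seq_tendsto_ae
  refine ⟨ms, tendsto_lintegral_of_tendsto_ae_of_le_add (fun i => hΦm _) hHm hH (fun i => hle _)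
    ?_ (hh.comp (hns.comp hms.tendsto_atTop))⟩
  filter_upwards [hae, hΦ] with x hx hΦx
  exact hΦx.comp hx

end MeasureTheory

theorem ContinuousOn.aemeasurable_comp_prodMk {β γ δ : Type*} [TopologicalSpace β]
    [MeasurableSpace β] [TopologicalSpace γ] [MeasurableSpace γ]
    [OpensMeasurableSpace (β × γ)] [TopologicalSpace δ] [MeasurableSpace δ] [BorelSpace δ]
    {Ω : Set β} (hΩ : MeasurableSet Ω) {F : β × γ → δ}
    (hF : ContinuousOn F (Ω ×ˢ Set.univ)) {ν : Measure β} {w : β → γ} (hw : Measurable w) :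
    AEMeasurable (fun x => F (x, w x)) (ν.restrict Ω) := by
  have hp : Measurable fun x => (x, w x) := measurable_id.prodMk hw
  have hF' := hF.aemeasurable (μ := ν.map fun x => (x, w x)) (hΩ.prod .univ)
  rw [Measure.restrict_map hp (hΩ.prod .univ), Set.mk_preimage_prod, Set.preimage_id',
    Set.preimage_univ, Set.inter_univ] at hF'
  exact hF'.comp_measurable hp

section Nemytskii

variable {α : Type*} [MeasurableSpace α] {μ : Measure α}

theorem tendsto_lintegral_sq_sub_comp_of_expModular {F : α → ℝ → ℝ} {A E : ℝ} (hA : 0 ≤ A)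
    (hE : ∫⁻ _x, ENNReal.ofReal E ∂μ ≠ ∞)
    (hFA : ∀ᵐ x ∂μ, ∀ s, F x s ^ 2 ≤ A * (exp (s ^ 2) - 1) + E)
    (hFc : ∀ᵐ x ∂μ, Continuous (F x)) {g : ℕ → α → ℝ} {g₀ : α → ℝ}
    (hg : ∀ n, Measurable (g n)) (hg₀ : Measurable g₀)
    (hFg : ∀ n, AEMeasurable (fun x => F x (g n x)) μ)
    (hFg₀ : AEMeasurable (fun x => F x (g₀ x)) μ) (hg₀M : MemOrliczHeart μ g₀)
    (hlim : ∀ c, Tendsto (fun n => expModular μ (fun x => c * (g n x - g₀ x))) atTop (𝓝 0)) :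
    Tendsto (fun n => ∫⁻ x, ENNReal.ofReal ((F x (g n x) - F x (g₀ x)) ^ 2) ∂μ)
      atTop (𝓝 0) := by
  have hTIM : TendstoInMeasure μ g atTop g₀ :=
    tendstoInMeasure_of_tendsto_expModular (fun n => by fun_prop) (by simpa using hlim 1)
  refine tendsto_lintegral_of_tendstoInMeasure_of_le_add
    (Φ := fun x s => ENNReal.ofReal ((F x s - F x (g₀ x)) ^ 2))
    (H := fun x => ENNReal.ofReal (A * (exp ((2 * g₀ x) ^ 2) - 1))
      + ENNReal.ofReal (2 * A * (exp (g₀ x ^ 2) - 1)) + ENNReal.ofReal (4 * E))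
    (h := fun n x => ENNReal.ofReal (A * (exp ((2 * (g n x - g₀ x)) ^ 2) - 1)))
    hTIM ?_ (fun n => (((hFg n).sub hFg₀).pow_const 2).ennreal_ofReal) (by fun_prop) ?_ ?_ ?_
  · filter_upwards [hFc] with x hx
    simpa using ENNReal.tendsto_ofReal (((hx.tendsto (g₀ x)).sub_const (F x (g₀ x))).pow 2)
  · have h2 := hg₀M.expModular_const_mul_lt_top 2
    have h1 : expModular μ g₀ < ∞ := by simpa using hg₀M.expModular_const_mul_lt_top 1
    simp_rw [ENNReal.ofReal_mul (show (0 : ℝ) ≤ 4 by norm_num)]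
    rw [lintegral_add_left (by fun_prop), lintegral_add_left (by fun_prop),
      lintegral_ofReal_mul_exp_sq_sub_one hA, lintegral_ofReal_mul_exp_sq_sub_one (by positivity),
      lintegral_const_mul' _ _ ENNReal.ofReal_ne_top]
    finiteness
  · intro n
    filter_upwards [hFA] with x hx
    exact (ENNReal.ofReal_le_ofReal (sq_sub_le_of_sq_le_exp hA (hx _) (hx _))).trans <|
      ENNReal.ofReal_add_le.trans <|
        add_le_add (ENNReal.ofReal_add_le.trans (add_le_add ENNReal.ofReal_add_le le_rfl)) le_rfl
  · simp_rw [lintegral_ofReal_mul_exp_sq_sub_one hA]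
    simpa using ENNReal.Tendsto.const_mul (hlim 2) (Or.inr ENNReal.ofReal_ne_top)

end Nemytskii

section Growth

variable {β : Type*} {Ω : Set β} {f : β → ℝ → ℝ}

theorem exists_sq_le_mul_exp_sq_sub_one_add
    (hf1 : ∀ M : ℝ, 0 < M → ∃ C : ℝ, 0 < C ∧ ∀ x ∈ Ω, ∀ s : ℝ, |s| ≤ M → |f x s| ≤ C)
    {M : ℝ} (hM : ∀ x ∈ Ω, ∀ s : ℝ, M ≤ |s| → |f x s| ≤ exp (s ^ 2 / 2)) :
    ∃ A E : ℝ, 0 ≤ A ∧ 0 ≤ E ∧ ∀ x ∈ Ω, ∀ s, f x s ^ 2 ≤ A * (exp (s ^ 2) - 1) + E := by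
  obtain ⟨C, hC, hfC⟩ := hf1 (max M 1) (lt_max_of_lt_right one_pos)
  refine ⟨2, C ^ 2, by norm_num, by positivity, fun x hx s => ?_⟩
  have hΦ := sq_le_exp_sq_sub_one s
  rcases le_or_gt (max M 1) |s| with hs | hs
  · have hs1 : 1 ≤ s ^ 2 := by nlinarith [sq_abs s, le_max_right M 1]
    have hbig : f x s ^ 2 ≤ exp (s ^ 2 / 2) ^ 2 :=
      sq_le_sq.2 ((hM x hx s ((le_max_left _ _).trans hs)).trans (le_abs_self _))
    rw [← exp_nat_mul, Nat.cast_ofNat, mul_div_cancel₀ _ two_ne_zero] at hbig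
    nlinarith
  · have hsmall : f x s ^ 2 ≤ C ^ 2 := sq_le_sq.2 ((hfC x hx s hs.le).trans (le_abs_self _))
    nlinarith

theorem exists_sq_le_mul_exp_sq_sub_one {A E : ℝ} (hA : 0 ≤ A) (hE : 0 ≤ E)
    (hAE : ∀ x ∈ Ω, ∀ s, f x s ^ 2 ≤ A * (exp (s ^ 2) - 1) + E) {ν C₀ δ₀ : ℝ} (hν : 1 ≤ ν)
    (hδ₀ : 0 < δ₀) (hf0 : ∀ x ∈ Ω, ∀ s, |s| ≤ δ₀ → |f x s| ≤ C₀ * |s| ^ ν) :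
    ∃ A' : ℝ, 0 ≤ A' ∧ ∀ x ∈ Ω, ∀ s, f x s ^ 2 ≤ A' * (exp (s ^ 2) - 1) := by
  set δ := min δ₀ 1
  have hδ : 0 < δ := lt_min hδ₀ one_pos
  refine ⟨A + E / δ ^ 2 + C₀ ^ 2, by positivity, fun x hx s => ?_⟩
  have hΦ := sq_le_exp_sq_sub_one s
  have hΦ0 : 0 ≤ exp (s ^ 2) - 1 := (sq_nonneg s).trans hΦ
  rcases le_or_gt δ |s| with hs | hs
  · have hE' : E ≤ E / δ ^ 2 * s ^ 2 := by
      rw [div_mul_eq_mul_div, le_div_iff₀ (by positivity)]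
      exact mul_le_mul_of_nonneg_left (by nlinarith [sq_abs s]) hE
    nlinarith [hAE x hx s, mul_le_mul_of_nonneg_left hΦ (by positivity : 0 ≤ E / δ ^ 2),
      mul_nonneg (sq_nonneg C₀) hΦ0]
  · have hpow : |s| ^ ν ≤ |s| := Real.rpow_le_self_of_le_one (abs_nonneg s)
      (hs.le.trans (min_le_right _ _)) hν
    have hsmall : f x s ^ 2 ≤ C₀ ^ 2 * s ^ 2 := calc
      f x s ^ 2 = |f x s| ^ 2 := (sq_abs _).symm
      _ ≤ (C₀ * |s| ^ ν) ^ 2 :=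
        pow_le_pow_left₀ (abs_nonneg _) (hf0 x hx s (hs.le.trans (min_le_left _ _))) 2
      _ = C₀ ^ 2 * (|s| ^ ν) ^ 2 := mul_pow _ _ _
      _ ≤ C₀ ^ 2 * |s| ^ 2 := by gcongr
      _ = C₀ ^ 2 * s ^ 2 := by rw [sq_abs]
    nlinarith [mul_le_mul_of_nonneg_left hΦ (sq_nonneg C₀), mul_nonneg hA hΦ0,
      mul_nonneg (by positivity : 0 ≤ E / δ ^ 2) hΦ0]

end Growth

/-- Let Ω ⊆ ℝ^N be measurable and f : Ω × ℝ → ℝ satisfy (f1) continuity and local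
boundedness in s uniformly in x; (f2) for every α > 0, f(x,s)/e^{α s²} → 0 as |s| → ∞
uniformly in x ∈ Ω; and, if Ω has infinite measure, (f5-u): there are μ > 1, C₀ > 0,
δ₀ > 0 with |f(x,s)| ≤ C₀|s|^μ for x ∈ Ω, |s| ≤ δ₀. If u ∈ 𝓜(Ω), (u_n) ⊂ 𝓜(Ω) and
‖u_n − u‖_{𝓛(Ω)} → 0, then ∫_Ω (f(x,u_n) − f(x,u))² dx → 0. -/
theorem stmt_7 {N : ℕ} (Ω : Set (EuclideanSpace ℝ (Fin N))) (hΩ : MeasurableSet Ω)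
    (f : EuclideanSpace ℝ (Fin N) → ℝ → ℝ)
    (hfC : ContinuousOn (fun p : EuclideanSpace ℝ (Fin N) × ℝ => f p.1 p.2)
      (Ω ×ˢ (Set.univ : Set ℝ)))
    (hf1 : ∀ M : ℝ, 0 < M → ∃ C : ℝ, 0 < C ∧ ∀ x ∈ Ω, ∀ s : ℝ, |s| ≤ M → |f x s| ≤ C)
    (hf2 : ∀ α : ℝ, 0 < α → ∀ ε : ℝ, 0 < ε → ∃ M : ℝ, 0 < M ∧
      ∀ x ∈ Ω, ∀ s : ℝ, M ≤ |s| → |f x s| ≤ ε * Real.exp (α * s ^ 2))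
    (hf5u : volume Ω = ⊤ → ∃ μ : ℝ, 1 < μ ∧ ∃ C₀ : ℝ, 0 < C₀ ∧ ∃ δ₀ : ℝ, 0 < δ₀ ∧
      ∀ x ∈ Ω, ∀ s : ℝ, |s| ≤ δ₀ → |f x s| ≤ C₀ * |s| ^ μ)
    (u : EuclideanSpace ℝ (Fin N) → ℝ) (un : ℕ → EuclideanSpace ℝ (Fin N) → ℝ)
    (hu : Measurable u) (hun : ∀ n, Measurable (un n))
    (huM : ∀ k : ℝ, 0 < k →
      ∫⁻ x in Ω, ENNReal.ofReal (Real.exp ((u x / k) ^ 2) - 1) < ⊤)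
    (hunM : ∀ n, ∀ k : ℝ, 0 < k →
      ∫⁻ x in Ω, ENNReal.ofReal (Real.exp ((un n x / k) ^ 2) - 1) < ⊤)
    (hlux : Tendsto (fun n => luxNorm (volume.restrict Ω) (fun x => un n x - u x))
      atTop (nhds 0)) :
    Tendsto (fun n => ∫⁻ x in Ω, ENNReal.ofReal ((f x (un n x) - f x (u x)) ^ 2))
      atTop (nhds 0) := by
  obtain ⟨M, -, hM⟩ := hf2 (1 / 2) one_half_pos 1 one_pos
  obtain ⟨A, E, hA, hE, hAE⟩ := exists_sq_le_mul_exp_sq_sub_one_add hf1 (M := M)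
    fun x hx s hs => (hM x hx s hs).trans_eq (by ring_nf)
  -- On a set of infinite measure the constant `E` is not integrable and has to be removed.
  obtain ⟨A, E, hA, hEfin, hAE⟩ : ∃ A E : ℝ, 0 ≤ A ∧ ∫⁻ _x in Ω, ENNReal.ofReal E ≠ ∞ ∧
      ∀ x ∈ Ω, ∀ s, f x s ^ 2 ≤ A * (exp (s ^ 2) - 1) + E := by
    by_cases hvol : volume Ω = ⊤
    · obtain ⟨ν, hν, C₀, -, δ₀, hδ₀, hf0⟩ := hf5u hvol
      obtain ⟨A', hA', hA'f⟩ := exists_sq_le_mul_exp_sq_sub_one hA hE hAE hν.le hδ₀ hf0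
      exact ⟨A', 0, hA', by simp, by simpa using hA'f⟩
    · exact ⟨A, E, hA, by simpa using ENNReal.mul_ne_top ENNReal.ofReal_ne_top hvol, hAE⟩
  have hdiff : ∀ n, expModular (volume.restrict Ω) (fun x => un n x - u x) < ∞ := fun n => by
    simpa using MemOrliczHeart.sub (hunM n) huM (hun n).aemeasurable 1 one_pos
  exact tendsto_lintegral_sq_sub_comp_of_expModular hA hEfin
    ((ae_restrict_mem hΩ).mono fun x hx => hAE x hx)
    ((ae_restrict_mem hΩ).mono fun x hx =>
      hfC.comp_continuous (Continuous.prodMk_right x) fun s => ⟨hx, Set.mem_univ s⟩)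
    hun hu (fun n => hfC.aemeasurable_comp_prodMk hΩ (hun n)) (hfC.aemeasurable_comp_prodMk hΩ hu)
    huM (tendsto_expModular_const_mul_of_luxNorm hdiff hlux)
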